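/- arXiv:1011.2723 — 8 statements merged into one kernel-verified Lean document; each statement's English description precedes it below -/
import Mathlib

section
/- Let (X, ν) be a finite measure space, let φ : X → ℝ be a bounded measurable function, let h : X → ℝ be ν-integrable, and let μ and n be real numbers. Then lim_{m→+∞} [ ∫_X (m·μ·exp(2φ/m) − h/m) dν − (m + 2n)·μ·ν(X) ] = ∫_X 2μ·(φ − n) dν. (This is the measure-theoretic content of Proposition 4.24 of the paper: on a compact Riemannian manifold, with ν = e^{−φ}dvol and h = |∇φ|², the (m,μ)-energy functional satisfies lim_{m→∞} 𝒲_μ^m(g, e^{−φ}dvol, m) − (m+2n)μ·Vol_φ(M) = 𝒲_μ^∞(g, e^{−φ}dvol, ∞).) -/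
open Filter Topology MeasureTheory

/-!
Since `m (e^{a/m} - 1)` is the difference quotient of `t ↦ e^{a t}` at `0` with step `1/m`, it
tends to `a`, and it is bounded by `2|a|` as soon as `m ≥ |a|`. For bounded `φ` on a finite
measure space, dominated convergence then gives `∫ m μ (e^{2φ/m} - 1) dν → ∫ 2 μ φ dν`, while
`∫ h/m dν → 0`; the term `(m + 2n) μ ν(X)` is exactly the integral of the constants `m μ + 2 n μ`.
-/

namespace Real

theorem tendsto_mul_exp_div_sub_one (a : ℝ) :
    Tendsto (fun m : ℝ => m * (exp (a / m) - 1)) atTop (𝓝 a) := by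
  have hslope := hasDerivAt_iff_tendsto_slope_zero.mp
    (by simpa using ((hasDerivAt_id (0 : ℝ)).const_mul a).exp :
      HasDerivAt (fun t => exp (a * t)) a 0)
  refine (hslope.comp <| tendsto_nhdsWithin_mono_right (fun _ hm => ne_of_gt hm)
    tendsto_inv_atTop_nhdsGT_zero).congr fun m => ?_
  simp [div_eq_mul_inv]

theorem abs_mul_exp_div_sub_one_le {a m : ℝ} (hm : 0 < m) (ha : |a| ≤ m) :
    |m * (exp (a / m) - 1)| ≤ 2 * |a| := by
  have hdiv : |a / m| ≤ 1 := by rwa [abs_div, abs_of_pos hm, div_le_one hm]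
  calc |m * (exp (a / m) - 1)| = m * |exp (a / m) - 1| := by rw [abs_mul, abs_of_pos hm]
    _ ≤ m * (2 * |a / m|) := by gcongr; exact abs_exp_sub_one_le hdiv
    _ = 2 * |a| := by rw [abs_div, abs_of_pos hm]; field_simp

end Real

section BoundedFunction

variable {X : Type*} [MeasurableSpace X] {ν : Measure X} [IsFiniteMeasure ν] {f : X → ℝ} {C : ℝ}

theorem integrable_exp_of_abs_le (hf : AEMeasurable f ν) (hC : ∀ᵐ x ∂ν, |f x| ≤ C) :
    Integrable (fun x => Real.exp (f x)) ν := by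
  refine .of_bound hf.exp.aestronglyMeasurable (Real.exp C) ?_
  filter_upwards [hC] with x hx
  rw [Real.norm_eq_abs, Real.abs_exp]
  exact Real.exp_le_exp.mpr ((le_abs_self _).trans hx)

theorem integrable_exp_div_of_abs_le (hf : AEMeasurable f ν) (hC : ∀ᵐ x ∂ν, |f x| ≤ C)
    (m : ℝ) : Integrable (fun x => Real.exp (f x / m)) ν := by
  refine integrable_exp_of_abs_le (hf.div_const m) (C := C / |m|) ?_
  filter_upwards [hC] with x hx
  rw [abs_div]
  exact div_le_div_of_nonneg_right hx (abs_nonneg m)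

theorem tendsto_integral_mul_exp_div_sub_one (hf : AEMeasurable f ν)
    (hC : ∀ᵐ x ∂ν, |f x| ≤ C) :
    Tendsto (fun m : ℝ => ∫ x, m * (Real.exp (f x / m) - 1) ∂ν) atTop (𝓝 (∫ x, f x ∂ν)) := by
  refine tendsto_integral_filter_of_dominated_convergence (fun _ => 2 * C) ?_ ?_
    (integrable_const _) (.of_forall fun x => Real.tendsto_mul_exp_div_sub_one (f x))
  · exact .of_forall fun m =>
      (((hf.div_const m).exp.sub aemeasurable_const).const_mul m).aestronglyMeasurable
  · filter_upwards [eventually_gt_atTop 0, eventually_ge_atTop C] with m hm hmC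
    filter_upwards [hC] with x hx
    rw [Real.norm_eq_abs]
    linarith [Real.abs_mul_exp_div_sub_one_le hm (hx.trans hmC)]

end BoundedFunction

/-- The measure-theoretic content of Proposition 4.24 of the paper: for a finite
measure `ν`, a bounded measurable `φ`, an integrable `h`, and reals `μ`, `n`,
`lim_{m → +∞} [∫ (m μ e^{2φ/m} − h/m) dν − (m + 2n) μ ν(X)] = ∫ 2μ(φ − n) dν`. -/
theorem energy_functional_limit {X : Type*} [MeasurableSpace X]
    (ν : Measure X) [IsFiniteMeasure ν]
    (φ h : X → ℝ) (hφ : Measurable φ) (hφb : ∃ C : ℝ, ∀ x, |φ x| ≤ C)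
    (hh : Integrable h ν) (μ n : ℝ) :
    Tendsto
      (fun m : ℝ =>
        (∫ x, (m * μ * Real.exp (2 * φ x / m) - h x / m) ∂ν)
          - (m + 2 * n) * μ * (ν Set.univ).toReal)
      atTop (𝓝 (∫ x, 2 * μ * (φ x - n) ∂ν)) := by
  obtain ⟨C, hC⟩ := hφb
  have hf : AEMeasurable (fun x => 2 * φ x) ν := (hφ.const_mul 2).aemeasurable
  have hfC : ∀ᵐ x ∂ν, |2 * φ x| ≤ 2 * C := .of_forall fun x => by
    rw [abs_mul, abs_two]; linarith [hC x]
  have hlim := ((tendsto_integral_mul_exp_div_sub_one hf hfC).const_mul μ).sub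
    ((tendsto_const_nhds (x := ∫ x, h x ∂ν)).div_atTop tendsto_id) |>.sub
    (tendsto_const_nhds (x := 2 * n * μ * ν.real Set.univ))
  convert hlim using 2 with m
  · have hexp := integrable_exp_div_of_abs_le hf hfC m
    rw [integral_sub (hexp.const_mul _) (hh.div_const m), integral_const_mul, integral_div,
      integral_const_mul, integral_sub hexp (integrable_const _), integral_const]
    simp only [smul_eq_mul, Measure.real, id]
    ring
  · have hfI : Integrable (fun x => 2 * φ x) ν := .of_bound hf.aestronglyMeasurable _ hfC
    simp_rw [show ∀ x, 2 * μ * (φ x - n) = μ * (2 * φ x) - 2 * n * μ from fun x => by ring]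
    rw [integral_sub (hfI.const_mul μ) (integrable_const _), integral_const_mul, integral_const,
      smul_eq_mul]
    ring
end

section
/- Fix a natural number n ≥ 1, real numbers m, λ, μ, smooth positive functions u, v : ℝⁿ → ℝ, a function R : ℝⁿ → ℝ, and a field T of symmetric bilinear forms on ℝⁿ. Consider the system of equations, required to hold at every point of ℝⁿ: (i) (u·v·T + (m+n−2)·v·Hess u − m·u·Hess v)₀ = 0, where S₀ = S − (1/n)(tr S)·⟨·,·⟩ denotes the tracefree part with respect to the Euclidean inner product; (ii) n·λ·v² = (uv)²·R + (m+2n−2)·u·v²·Δu − m·u²·v·Δv − (m+n−1)·n·v²·|∇u|² + m·n·u·v·⟨∇u,∇v⟩; (iii) n·μ·u² = (uv)²·R + (m+n−2)·u·v²·Δu − (m−n)·u²·v·Δv − (m+n−2)·n·u·v·⟨∇u,∇v⟩ + (m−1)·n·u²·|∇v|². Then the system holds for the data (u, v, λ, μ, m) if and only if it holds for the data (v, u, μ, λ, 2−m−n). (This is the invariance of the quasi-Einstein system (4.8) of the paper under the change of variables (u,v,λ,μ,m) ↦ (v,u,μ,λ,2−m−n), which is the content of its duality Corollary 4.11: if (Mⁿ,g,v^m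 dvol) with characteristic constant μ has u as a positive quasi-Einstein scale with quasi-Einstein constant λ, then (Mⁿ,g,u^{2−m−n}dvol) with characteristic constant λ has v as a quasi-Einstein scale with quasi-Einstein constant μ. Here R and T play the roles of the scalar and Ricci curvature of the fixed background metric.) -/
open scoped RealInnerProductSpace

noncomputable section

/-- The Euclidean Hessian of `u` at `x`, as a bilinear map evaluated on `y`, `z`. -/
def hess {n : ℕ} (u : EuclideanSpace ℝ (Fin n) → ℝ)
    (x y z : EuclideanSpace ℝ (Fin n)) : ℝ :=
  fderiv ℝ (fderiv ℝ u) x y z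

/-- The Euclidean Laplacian `Δu = tr (Hess u)`. -/
def lap {n : ℕ} (u : EuclideanSpace ℝ (Fin n) → ℝ)
    (x : EuclideanSpace ℝ (Fin n)) : ℝ :=
  ∑ i : Fin n, hess u x (EuclideanSpace.single i (1 : ℝ)) (EuclideanSpace.single i (1 : ℝ))

/-- The quasi-Einstein system (4.8) of the paper on Euclidean space `ℝⁿ`, for background
scalar-curvature function `R` and background symmetric bilinear form field `T`:
(i) the tracefree part of `u v T + (m+n−2) v Hess u − m u Hess v` vanishes;
(ii) the trace equation determining the quasi-Einstein constant `λ`;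
(iii) the equation determining the characteristic constant `μ`. -/
def qeSystem {n : ℕ} (R : EuclideanSpace ℝ (Fin n) → ℝ)
    (T : EuclideanSpace ℝ (Fin n) → EuclideanSpace ℝ (Fin n) →
      EuclideanSpace ℝ (Fin n) → ℝ)
    (u v : EuclideanSpace ℝ (Fin n) → ℝ) (lam mu m : ℝ) : Prop :=
  (∀ x y z,
    (u x * v x * T x y z + (m + n - 2) * v x * hess u x y z - m * u x * hess v x y z)
      - (1 / (n : ℝ)) *
        (u x * v x * (∑ i : Fin n, T x (EuclideanSpace.single i (1 : ℝ))
            (EuclideanSpace.single i (1 : ℝ)))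
          + (m + n - 2) * v x * lap u x - m * u x * lap v x) * ⟪y, z⟫ = 0)
  ∧ (∀ x,
    (n : ℝ) * lam * v x ^ 2 =
      (u x * v x) ^ 2 * R x + (m + 2 * n - 2) * u x * v x ^ 2 * lap u x
        - m * u x ^ 2 * v x * lap v x
        - (m + n - 1) * n * v x ^ 2 * ‖gradient u x‖ ^ 2
        + m * n * u x * v x * ⟪gradient u x, gradient v x⟫)
  ∧ (∀ x,
    (n : ℝ) * mu * u x ^ 2 =
      (u x * v x) ^ 2 * R x + (m + n - 2) * u x * v x ^ 2 * lap u x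
        - (m - n) * u x ^ 2 * v x * lap v x
        - (m + n - 2) * n * u x * v x * ⟪gradient u x, gradient v x⟫
        + (m - 1) * n * u x ^ 2 * ‖gradient v x‖ ^ 2)

/-- The duality Corollary 4.11 of the paper: the Euclidean quasi-Einstein system
is invariant under the change of variables `(u, v, λ, μ, m) ↦ (v, u, μ, λ, 2−m−n)`. -/
theorem qeSystem_duality {n : ℕ} (hn : 1 ≤ n) (m lam mu : ℝ)
    (u v : EuclideanSpace ℝ (Fin n) → ℝ)
    (hu : ContDiff ℝ (⊤ : ℕ∞) u) (hv : ContDiff ℝ (⊤ : ℕ∞) v)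
    (hupos : ∀ x, 0 < u x) (hvpos : ∀ x, 0 < v x)
    (R : EuclideanSpace ℝ (Fin n) → ℝ)
    (T : EuclideanSpace ℝ (Fin n) → EuclideanSpace ℝ (Fin n) →
      EuclideanSpace ℝ (Fin n) → ℝ)
    (hTsymm : ∀ x y z, T x y z = T x z y)
    (hTbilin : ∀ x, IsLinearMap ℝ (fun y => T x y) ∧ ∀ y, IsLinearMap ℝ (T x y)) :
    qeSystem R T u v lam mu m ↔ qeSystem R T v u mu lam (2 - m - n) := by
  unfold qeSystem
  constructor <;> rintro ⟨h1, h2, h3⟩ <;>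
    refine ⟨fun x y z => ?_, fun x => ?_, fun x => ?_⟩
  · linear_combination h1 x y z
  · linear_combination h3 x + ((m + (n : ℝ) - 2) * n * u x * v x) *
      real_inner_comm (gradient u x) (gradient v x)
  · linear_combination h2 x - (m * n * u x * v x) *
      real_inner_comm (gradient u x) (gradient v x)
  · linear_combination h1 x y z
  · linear_combination h3 x - (m * n * u x * v x) *
      real_inner_comm (gradient v x) (gradient u x)
  · linear_combination h2 x + ((m + (n : ℝ) - 2) * n * u x * v x) *
      real_inner_comm (gradient v x) (gradient u x)

end
end

section
/- Fix a real number m > 1 and a natural number n ≥ 3, and let (X, Y, W) : ℝ → ℝ³ be a differentiable solution of the Böhm system with Y(t) > 0, W(t) > 0 and α·X(t) ≠ 1 for all t. Define κ(t) = W(t)^{−2m/(m+n−1)} · Y(t)^{−2(n−1)/(m+n−1)} · (1 − α·X(t))². Then κ is differentiable and satisfies κ′(t) = −(2(n−1)/((m−1)(m+n−1))) · (1 − X(t)/α)² · (1 − α·X(t))^{−1} · κ(t) for all t. (This is the Lyapunov-derivative computation for Böhm's function κ in the proof of Theorem 5.7 of the paper, where 1/α = √(m(m+n−2)/(n−1)).)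 -/
/-!
Writing `Q = X² − Y²/(m−1)`, the system gives `W'/W = Q`, `Y'/Y = Q − cX + 1/(m−1)` and
`X' = XQ + cY² − X`, so the logarithmic derivative of `κ` is an explicit rational function of
`X, Y`. Since the two exponents sum to `−2`, its `Y²`-terms cancel exactly when `cα = 1/(m−1)`,
and what remains collapses to a multiple of `(1 − X/α)²` exactly when
`α² m (m+n−2) = n − 1`; these are the two relations that the choice of `c` and `α` encodes.
-/

theorem HasDerivAt.rpow_const_of_eq_mul {f : ℝ → ℝ} {g x : ℝ} (p : ℝ)
    (hf : HasDerivAt f (f x * g) x) (hx : f x ≠ 0) :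
    HasDerivAt (fun y => f y ^ p) (p * g * f x ^ p) x := by
  refine (hf.rpow_const (p := p) (Or.inl hx)).congr_deriv ?_
  rw [Real.rpow_sub_one hx]
  field_simp

section BoehmParameters

variable {m ν : ℝ}

theorem boehm_alpha_sq_mul (hm : 1 < m) (hν : 1 < ν) :
    Real.sqrt ((ν - 1) / (m * (m + ν - 2))) ^ 2 * (m * (m + ν - 2)) = ν - 1 := by
  have hpos : 0 < m * (m + ν - 2) := by nlinarith
  rw [Real.sq_sqrt (by positivity), div_mul_cancel₀ _ hpos.ne']

theorem boehm_c_eq_one_div :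
    (1 / (m - 1)) * Real.sqrt (m * (m + ν - 2) / (ν - 1)) =
      1 / ((m - 1) * Real.sqrt ((ν - 1) / (m * (m + ν - 2)))) := by
  rw [← inv_div (ν - 1), Real.sqrt_inv]
  field_simp

end BoehmParameters

theorem boehm_kappa_logDeriv_mul (m ν α c x y : ℝ) (hm : m - 1 ≠ 0) (hmν : m + ν - 1 ≠ 0)
    (hα : α ≠ 0) (hαsq : α ^ 2 * (m * (m + ν - 2)) = ν - 1) (hc : c = 1 / ((m - 1) * α)) :
    (-2 * m / (m + ν - 1) * (x ^ 2 - y ^ 2 / (m - 1)) +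
        -2 * (ν - 1) / (m + ν - 1) * (x ^ 2 - y ^ 2 / (m - 1) - c * x + 1 / (m - 1))) *
          (1 - α * x) -
        2 * α * (x * (x ^ 2 - y ^ 2 / (m - 1)) + c * y ^ 2 - x) =
      -(2 * (ν - 1) / ((m - 1) * (m + ν - 1))) * (1 - x / α) ^ 2 := by
  subst hc
  linear_combination (norm := skip) 2 * x * (1 - x / α) / (α * (m - 1) * (m + ν - 1)) * hαsq
  field_simp
  ring

theorem boehm_lyapunov_deriv_general (m : ℝ) (hm : 1 < m) (n : ℕ) (hn : 3 ≤ n)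
    (X Y W : ℝ → ℝ)
    (c : ℝ) (hc : c = (1 / (m - 1)) * Real.sqrt (m * (m + n - 2) / (n - 1)))
    (α : ℝ) (hα : α = Real.sqrt ((n - 1) / (m * (m + n - 2))))
    (hX : ∀ t, HasDerivAt X
      (X t * (X t ^ 2 - Y t ^ 2 / (m - 1)) + c * Y t ^ 2 - X t) t)
    (hY : ∀ t, HasDerivAt Y
      (Y t * (X t ^ 2 - Y t ^ 2 / (m - 1)) - c * X t * Y t + Y t / (m - 1)) t)
    (hW : ∀ t, HasDerivAt W (W t * (X t ^ 2 - Y t ^ 2 / (m - 1))) t)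
    (hYpos : ∀ t, 0 < Y t) (hWpos : ∀ t, 0 < W t)
    (κ : ℝ → ℝ)
    (hκ : ∀ t, κ t = W t ^ (-2 * m / (m + n - 1)) *
      Y t ^ (-2 * ((n : ℝ) - 1) / (m + n - 1)) * (1 - α * X t) ^ 2) :
    ∀ t, HasDerivAt κ
      (-(2 * ((n : ℝ) - 1) / ((m - 1) * (m + n - 1))) * (1 - X t / α) ^ 2 *
        (1 - α * X t)⁻¹ * κ t) t := by
  have hn1 : (1 : ℝ) < n := by exact_mod_cast (by omega : 1 < n)
  have hαsq : α ^ 2 * (m * (m + n - 2)) = n - 1 := hα ▸ boehm_alpha_sq_mul hm hn1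
  have hcα : c = 1 / ((m - 1) * α) := by rw [hc, hα, boehm_c_eq_one_div]
  have hα0 : α ≠ 0 := by rintro rfl; nlinarith
  rw [show κ = _ from funext hκ]
  intro t
  set a : ℝ := -2 * m / (m + n - 1)
  set b : ℝ := -2 * ((n : ℝ) - 1) / (m + n - 1)
  have hWpow := (hW t).rpow_const_of_eq_mul a (hWpos t).ne'
  have hYpow := ((hY t).congr_deriv (by ring : _ = Y t * (X t ^ 2 - Y t ^ 2 / (m - 1) - c * X t
    + 1 / (m - 1)))).rpow_const_of_eq_mul b (hYpos t).ne'
  have hsq := (((hX t).const_mul α).const_sub 1).fun_pow 2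
  refine ((hWpow.fun_mul hYpow).fun_mul hsq).congr_deriv ?_
  have key := boehm_kappa_logDeriv_mul m n α c (X t) (Y t) (by linarith) (by linarith) hα0 hαsq hcα
  linear_combination (W t ^ a * Y t ^ b * (1 - α * X t)) * key -
    (-(2 * ((n : ℝ) - 1) / ((m - 1) * (m + n - 1))) * (1 - X t / α) ^ 2 * W t ^ a * Y t ^ b) *
      inv_mul_mul_self (1 - α * X t)

/-- The Lyapunov-derivative computation for Böhm's function `κ` in the proof of
Theorem 5.7 of the paper: along a solution of the Böhm system with `Y > 0`, `W > 0`
and `αX ≠ 1`, the function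
`κ = W^{−2m/(m+n−1)} Y^{−2(n−1)/(m+n−1)} (1 − αX)²` satisfies
`κ′ = −(2(n−1)/((m−1)(m+n−1))) (1 − X/α)² (1 − αX)⁻¹ κ`. -/
theorem boehm_lyapunov_deriv (m : ℝ) (hm : 1 < m) (n : ℕ) (hn : 3 ≤ n)
    (X Y W : ℝ → ℝ)
    (c : ℝ) (hc : c = (1 / (m - 1)) * Real.sqrt (m * (m + n - 2) / (n - 1)))
    (α : ℝ) (hα : α = Real.sqrt ((n - 1) / (m * (m + n - 2))))
    (hX : ∀ t, HasDerivAt X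
      (X t * (X t ^ 2 - Y t ^ 2 / (m - 1)) + c * Y t ^ 2 - X t) t)
    (hY : ∀ t, HasDerivAt Y
      (Y t * (X t ^ 2 - Y t ^ 2 / (m - 1)) - c * X t * Y t + Y t / (m - 1)) t)
    (hW : ∀ t, HasDerivAt W (W t * (X t ^ 2 - Y t ^ 2 / (m - 1))) t)
    (hYpos : ∀ t, 0 < Y t) (hWpos : ∀ t, 0 < W t)
    (hαX : ∀ t, α * X t ≠ 1)
    (κ : ℝ → ℝ)
    (hκ : ∀ t, κ t = W t ^ (-2 * m / (m + n - 1)) *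
      Y t ^ (-2 * ((n : ℝ) - 1) / (m + n - 1)) * (1 - α * X t) ^ 2) :
    ∀ t, HasDerivAt κ
      (-(2 * ((n : ℝ) - 1) / ((m - 1) * (m + n - 1))) * (1 - X t / α) ^ 2 *
        (1 - α * X t)⁻¹ * κ t) t :=
  boehm_lyapunov_deriv_general m hm n hn X Y W c hc α hα hX hY hW hYpos hWpos κ hκ
end

section
/- Fix a real number m > 1 and a natural number n ≥ 3, and let (X, Y, W) : ℝ → ℝ³ be a differentiable solution of the Böhm system with X(t) ≥ 0, Y(t) > 0, W(t) > 0 and α·X(t) < 1 for all t. Define κ(t) = W(t)^{−2m/(m+n−1)} · Y(t)^{−2(n−1)/(m+n−1)} · (1 − α·X(t))². Then κ′(t) ≤ 0 for all t, with equality at t if and only if X(t) = α. (This is the assertion in the proof of Theorem 5.7 of the paper that κ is a Lyapunov function in the first octant.) -/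
/-!
Writing `W' = W p`, `Y' = Y q`, the derivative of `κ = W^a Y^b (1 - αX)²` is
`W^a Y^b (1 - αX) ((a p + b q)(1 - αX) - 2αX')`. For the Böhm field and the exponents
`a = -2m/(m+n-1)`, `b = -2(n-1)/(m+n-1)`, the relations `cα(m-1) = 1` and
`α² m(m+n-2) = n-1` collapse the last factor to `-2m(m+n-2)/((m-1)(m+n-1)) · (X - α)²`,
whose sign and zero set are read off since `W^a Y^b (1 - αX) > 0`.
-/

open Real

theorem HasDerivAt.rpow_const_of_logDeriv {f : ℝ → ℝ} {p t : ℝ} (a : ℝ)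
    (hf : HasDerivAt f (f t * p) t) (hft : f t ≠ 0) :
    HasDerivAt (fun s => f s ^ a) (f t ^ a * (a * p)) t :=
  (hf.rpow_const (Or.inl hft)).congr_deriv <| by
    rw [rpow_sub_one hft]; field_simp

theorem hasDerivAt_rpow_mul_rpow_mul_one_sub_sq {W Y X : ℝ → ℝ} {p q x' t : ℝ}
    (a b α : ℝ) (hW : HasDerivAt W (W t * p) t) (hY : HasDerivAt Y (Y t * q) t)
    (hX : HasDerivAt X x' t) (hWt : W t ≠ 0) (hYt : Y t ≠ 0) :
    HasDerivAt (fun s => W s ^ a * Y s ^ b * (1 - α * X s) ^ 2)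
      (W t ^ a * Y t ^ b * (1 - α * X t) * ((a * p + b * q) * (1 - α * X t) - 2 * α * x')) t :=
  (((hW.rpow_const_of_logDeriv a hWt).mul (hY.rpow_const_of_logDeriv b hYt)).mul
    (((hX.const_mul α).const_sub 1).pow 2)).congr_deriv <| by
      simp only [Pi.mul_apply, Pi.pow_apply]; ring

theorem sqrt_div_mul_sqrt_div_self {A B : ℝ} (hA : 0 < A) (hB : 0 < B) :
    √(A / B) * √(B / A) = 1 := by
  rw [← inv_div, sqrt_inv, inv_mul_cancel₀ (sqrt_pos.2 (div_pos hB hA)).ne']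

theorem boehm_lyapunov_identity {m ν α c : ℝ} (x y : ℝ) (hm : m - 1 ≠ 0) (hmν : m + ν - 1 ≠ 0)
    (hcα : c * α * (m - 1) = 1) (hα : α ^ 2 * (m * (m + ν - 2)) = ν - 1) :
    (-2 * m / (m + ν - 1) * (x ^ 2 - y ^ 2 / (m - 1)) +
        -2 * (ν - 1) / (m + ν - 1) * (x ^ 2 - y ^ 2 / (m - 1) - c * x + 1 / (m - 1))) *
        (1 - α * x) - 2 * α * (x * (x ^ 2 - y ^ 2 / (m - 1)) + c * y ^ 2 - x) =
      -(2 * m * (m + ν - 2) / ((m - 1) * (m + ν - 1))) * (x - α) ^ 2 := by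
  field_simp
  linear_combination
    ((ν - 1) * (1 - α * x) - y ^ 2 * (m + ν - 1) + α * m * (m + ν - 2) * (x - α) * (1 - α * x)) * hcα
    - (c * (m - 1) * (1 - α * x) + x) * (x - α) * hα

theorem boehm_lyapunov_general (m : ℝ) (hm : 1 < m) (n : ℕ) (hn : 3 ≤ n)
    (X Y W : ℝ → ℝ)
    (c : ℝ) (hc : c = (1 / (m - 1)) * Real.sqrt (m * (m + n - 2) / (n - 1)))
    (α : ℝ) (hα : α = Real.sqrt ((n - 1) / (m * (m + n - 2))))
    (hX : ∀ t, HasDerivAt X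
      (X t * (X t ^ 2 - Y t ^ 2 / (m - 1)) + c * Y t ^ 2 - X t) t)
    (hY : ∀ t, HasDerivAt Y
      (Y t * (X t ^ 2 - Y t ^ 2 / (m - 1)) - c * X t * Y t + Y t / (m - 1)) t)
    (hW : ∀ t, HasDerivAt W (W t * (X t ^ 2 - Y t ^ 2 / (m - 1))) t)
    (hYpos : ∀ t, 0 < Y t) (hWpos : ∀ t, 0 < W t)
    (hαX : ∀ t, α * X t < 1)
    (κ : ℝ → ℝ)
    (hκ : ∀ t, κ t = W t ^ (-2 * m / (m + n - 1)) *
      Y t ^ (-2 * ((n : ℝ) - 1) / (m + n - 1)) * (1 - α * X t) ^ 2) :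
    ∀ t, deriv κ t ≤ 0 ∧ (deriv κ t = 0 ↔ X t = α) := by
  have hn1 : (0 : ℝ) < n - 1 := by
    have : (3 : ℝ) ≤ n := by exact_mod_cast hn
    linarith
  have hm1 : m - 1 ≠ 0 := by linarith
  have hmn2 : 0 < m + n - 2 := by linarith
  have hmn1 : 0 < m + n - 1 := by linarith
  have hA : 0 < m * (m + n - 2) := by positivity
  have hαsq : α ^ 2 * (m * (m + n - 2)) = n - 1 := by
    rw [hα, sq_sqrt (by positivity), div_mul_cancel₀ _ hA.ne']
  have hcα : c * α * (m - 1) = 1 := calc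
    c * α * (m - 1) = (m - 1)⁻¹ * (m - 1) *
        (√(m * (m + n - 2) / (n - 1)) * √((n - 1) / (m * (m + n - 2)))) := by
      rw [hc, hα]; ring
    _ = 1 := by rw [inv_mul_cancel₀ hm1, sqrt_div_mul_sqrt_div_self hA hn1, one_mul]
  intro t
  have hderiv := hasDerivAt_rpow_mul_rpow_mul_one_sub_sq (-2 * m / (m + n - 1))
    (-2 * ((n : ℝ) - 1) / (m + n - 1)) α (hW t)
    ((hY t).congr_deriv (g' := Y t * (X t ^ 2 - Y t ^ 2 / (m - 1) - c * X t + 1 / (m - 1)))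
      (by ring)) (hX t) (hWpos t).ne' (hYpos t).ne'
  rw [boehm_lyapunov_identity (X t) (Y t) hm1 hmn1.ne' hcα hαsq] at hderiv
  rw [show κ = _ from funext hκ, hderiv.deriv]
  have hK : 0 < W t ^ (-2 * m / (m + n - 1)) * Y t ^ (-2 * ((n : ℝ) - 1) / (m + n - 1)) *
      (1 - α * X t) :=
    mul_pos (mul_pos (rpow_pos_of_pos (hWpos t) _) (rpow_pos_of_pos (hYpos t) _))
      (sub_pos.2 (hαX t))
  have hC : 0 < 2 * m * (m + n - 2) / ((m - 1) * (m + n - 1)) := by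
    apply div_pos <;> nlinarith
  refine ⟨mul_nonpos_of_nonneg_of_nonpos hK.le
    (mul_nonpos_of_nonpos_of_nonneg (neg_nonpos.2 hC.le) (sq_nonneg _)), ?_⟩
  rw [mul_eq_zero_iff_left hK.ne', mul_eq_zero_iff_left (neg_ne_zero.2 hC.ne'),
    pow_eq_zero_iff two_ne_zero, sub_eq_zero]

/-- The assertion in the proof of Theorem 5.7 of the paper that
`κ = W^{−2m/(m+n−1)} Y^{−2(n−1)/(m+n−1)} (1 − αX)²` is a Lyapunov function for the
Böhm system in the first octant: along a solution with `X ≥ 0`, `Y > 0`, `W > 0`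
and `αX < 1`, one has `κ′ ≤ 0`, with equality at `t` exactly when `X t = α`. -/
theorem boehm_lyapunov (m : ℝ) (hm : 1 < m) (n : ℕ) (hn : 3 ≤ n)
    (X Y W : ℝ → ℝ)
    (c : ℝ) (hc : c = (1 / (m - 1)) * Real.sqrt (m * (m + n - 2) / (n - 1)))
    (α : ℝ) (hα : α = Real.sqrt ((n - 1) / (m * (m + n - 2))))
    (hX : ∀ t, HasDerivAt X
      (X t * (X t ^ 2 - Y t ^ 2 / (m - 1)) + c * Y t ^ 2 - X t) t)
    (hY : ∀ t, HasDerivAt Y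
      (Y t * (X t ^ 2 - Y t ^ 2 / (m - 1)) - c * X t * Y t + Y t / (m - 1)) t)
    (hW : ∀ t, HasDerivAt W (W t * (X t ^ 2 - Y t ^ 2 / (m - 1))) t)
    (hXnonneg : ∀ t, 0 ≤ X t) (hYpos : ∀ t, 0 < Y t) (hWpos : ∀ t, 0 < W t)
    (hαX : ∀ t, α * X t < 1)
    (κ : ℝ → ℝ)
    (hκ : ∀ t, κ t = W t ^ (-2 * m / (m + n - 1)) *
      Y t ^ (-2 * ((n : ℝ) - 1) / (m + n - 1)) * (1 - α * X t) ^ 2) :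
    ∀ t, deriv κ t ≤ 0 ∧ (deriv κ t = 0 ↔ X t = α) :=
  boehm_lyapunov_general m hm n hn X Y W c hc α hα hX hY hW hYpos hWpos hαX κ hκ
end

section
/- Fix a real number m > 1 and a natural number n ≥ 3. Define I = (√((m+n−2)/(m(n−1))), √((m−1)(n−2)/(m(n−1))), 0) and K = (√((n−1)/(m(m+n−2))), √((m−1)(n−1)/(m(m+n−2))), √((m−1)/(m+n−2))). Then both I and K lie on the unit sphere in ℝ³ (their coordinates' squares sum to 1) and both are equilibrium points of the Böhm system, i.e. the right-hand side of the system vanishes at I and at K. (These are the two critical points identified in the proof of Theorem 5.7 of the paper.) -/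
/-!
Both points are pinned down by `c`. On the cone `Y² = (m-1)X²` the common factor
`X² - Y²/(m-1)` vanishes, and what remains of the system is zero exactly when
`(m-1) c X = 1`; this is `K`, since `(m-1) c = √(m(m+n-2)/(n-1))` and `X_K` is the inverse
of that square root. In the plane `W = 0`, a point of the unit circle with `m X = (m-1) c`
is an equilibrium; this is `I`, since `m X_I = √(m(m+n-2)/(n-1))` as well.
-/

noncomputable section

/-- First component of the right-hand side of the Böhm system. -/
def boehmRHS₁ (m c X Y W : ℝ) : ℝ := X * (X ^ 2 - Y ^ 2 / (m - 1)) + c * Y ^ 2 - X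

/-- Second component of the right-hand side of the Böhm system. -/
def boehmRHS₂ (m c X Y W : ℝ) : ℝ :=
  Y * (X ^ 2 - Y ^ 2 / (m - 1)) - c * X * Y + Y / (m - 1)

/-- Third component of the right-hand side of the Böhm system. -/
def boehmRHS₃ (m X Y W : ℝ) : ℝ := W * (X ^ 2 - Y ^ 2 / (m - 1))

def IsBoehmEquilibrium (m c X Y W : ℝ) : Prop :=
  boehmRHS₁ m c X Y W = 0 ∧ boehmRHS₂ m c X Y W = 0 ∧ boehmRHS₃ m X Y W = 0

section Equilibria

variable {m c X Y : ℝ}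

theorem isBoehmEquilibrium_of_sq_eq (hm : m - 1 ≠ 0) (hY : Y ^ 2 = (m - 1) * X ^ 2)
    (hX : (m - 1) * c * X = 1) (W : ℝ) : IsBoehmEquilibrium m c X Y W := by
  have hs : X ^ 2 - Y ^ 2 / (m - 1) = 0 := by rw [hY]; field_simp; ring
  have hcX : c * X = 1 / (m - 1) := by field_simp; linear_combination hX
  refine ⟨?_, ?_, ?_⟩ <;> simp only [boehmRHS₁, boehmRHS₂, boehmRHS₃, hs]
  · linear_combination X * hX + c * hY
  · linear_combination -Y * hcX
  · ring

theorem isBoehmEquilibrium_of_sq_add_sq_eq_one (hm : m - 1 ≠ 0) (hXY : X ^ 2 + Y ^ 2 = 1)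
    (hX : m * X = (m - 1) * c) : IsBoehmEquilibrium m c X Y 0 := by
  have hc : c = m * X / (m - 1) := by field_simp; linear_combination -hX
  have hY : Y ^ 2 = 1 - X ^ 2 := by linear_combination hXY
  refine ⟨?_, ?_, ?_⟩ <;> simp only [boehmRHS₁, boehmRHS₂, boehmRHS₃, hc, hY]
  · field_simp; ring
  · field_simp; ring
  · ring

end Equilibria

/-- The two critical points identified in the proof of Theorem 5.7 of the paper:
both `I = (√((m+n−2)/(m(n−1))), √((m−1)(n−2)/(m(n−1))), 0)` and
`K = (√((n−1)/(m(m+n−2))), √((m−1)(n−1)/(m(m+n−2))), √((m−1)/(m+n−2)))` lie on the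
unit sphere in `ℝ³` and are equilibrium points of the Böhm system. -/
theorem boehm_critical_points (m : ℝ) (hm : 1 < m) (n : ℕ) (hn : 3 ≤ n)
    (c : ℝ) (hc : c = (1 / (m - 1)) * Real.sqrt (m * (m + n - 2) / (n - 1)))
    (xI yI wI xK yK wK : ℝ)
    (hxI : xI = Real.sqrt ((m + n - 2) / (m * (n - 1))))
    (hyI : yI = Real.sqrt ((m - 1) * (n - 2) / (m * (n - 1))))
    (hwI : wI = 0)
    (hxK : xK = Real.sqrt ((n - 1) / (m * (m + n - 2))))
    (hyK : yK = Real.sqrt ((m - 1) * (n - 1) / (m * (m + n - 2))))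
    (hwK : wK = Real.sqrt ((m - 1) / (m + n - 2))) :
    (xI ^ 2 + yI ^ 2 + wI ^ 2 = 1 ∧
      boehmRHS₁ m c xI yI wI = 0 ∧ boehmRHS₂ m c xI yI wI = 0 ∧
      boehmRHS₃ m xI yI wI = 0) ∧
    (xK ^ 2 + yK ^ 2 + wK ^ 2 = 1 ∧
      boehmRHS₁ m c xK yK wK = 0 ∧ boehmRHS₂ m c xK yK wK = 0 ∧
      boehmRHS₃ m xK yK wK = 0) := by
  subst hwI
  have hn' : (3 : ℝ) ≤ n := by exact_mod_cast hn
  have hm₀ : m - 1 ≠ 0 := by linarith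
  have hm' : m ≠ 0 := by linarith
  have hn₁ : (n : ℝ) - 1 ≠ 0 := by linarith
  have hmn : m + n - 2 ≠ 0 := by linarith
  have hxI2 : xI ^ 2 = (m + n - 2) / (m * (n - 1)) := by
    rw [hxI, Real.sq_sqrt (div_nonneg (by linarith) (by nlinarith))]
  have hyI2 : yI ^ 2 = (m - 1) * (n - 2) / (m * (n - 1)) := by
    rw [hyI, Real.sq_sqrt (div_nonneg (by nlinarith) (by nlinarith))]
  have hxK2 : xK ^ 2 = (n - 1) / (m * (m + n - 2)) := by
    rw [hxK, Real.sq_sqrt (div_nonneg (by linarith) (by nlinarith))]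
  have hyK2 : yK ^ 2 = (m - 1) * (n - 1) / (m * (m + n - 2)) := by
    rw [hyK, Real.sq_sqrt (div_nonneg (by nlinarith) (by nlinarith))]
  have hwK2 : wK ^ 2 = (m - 1) / (m + n - 2) := by
    rw [hwK, Real.sq_sqrt (div_nonneg (by linarith) (by linarith))]
  have hA : 0 < m * (m + n - 2) / (n - 1) := div_pos (by nlinarith) (by linarith)
  have hc' : (m - 1) * c = Real.sqrt (m * (m + n - 2) / (n - 1)) := by
    rw [hc]; field_simp
  have hI : xI ^ 2 + yI ^ 2 = 1 := by
    rw [hxI2, hyI2]; field_simp; ring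
  have hmxI : m * xI = (m - 1) * c := by
    have hxI0 : 0 ≤ xI := hxI ▸ Real.sqrt_nonneg _
    rw [hc', eq_comm, Real.sqrt_eq_iff_eq_sq hA.le (by positivity), mul_pow, hxI2]
    field_simp
  have hcxK : (m - 1) * c * xK = 1 := by
    rw [hc', hxK, ← inv_div (m * (m + n - 2)), Real.sqrt_inv]
    exact mul_inv_cancel₀ (Real.sqrt_ne_zero'.mpr hA)
  refine ⟨⟨?_, isBoehmEquilibrium_of_sq_add_sq_eq_one hm₀ hI hmxI⟩,
    ⟨?_, isBoehmEquilibrium_of_sq_eq hm₀ ?_ hcxK wK⟩⟩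
  · linear_combination hI
  · rw [hxK2, hyK2, hwK2]; field_simp; ring
  · rw [hxK2, hyK2]; field_simp
end
end

section
/- Fix a real number m > 1 and a natural number n ≥ 3. If (X, Y, W) ∈ ℝ³ satisfies X > 0, Y > 0, W > 0, X² + Y² + W² = 1, and the right-hand side of the Böhm system vanishes at (X, Y, W), then (X, Y, W) = K, where K = (√((n−1)/(m(m+n−2))), √((m−1)(n−1)/(m(m+n−2))), √((m−1)/(m+n−2))). (This is the assertion in the proof of Theorem 5.7 of the paper that K is the only fixed point of the system on the unit sphere in the open first octant.) -/
/-!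
Since `W > 0`, the `W`-equation forces `X² = Y² / (m - 1)`. With this, the `Y`-equation divided
by `Y` reads `c X = 1 / (m - 1)`, i.e. `X = 1 / √q` for `q = m (m + n - 2) / (n - 1)`.
Then `Y² = (m - 1) X²`, and the sphere gives `W² = 1 - m X²`.
-/

lemma sq_eq_inv_of_sqrt_mul_eq_one {q x : ℝ} (hq : 0 ≤ q) (h : √q * x = 1) : x ^ 2 = 1 / q := by
  refine eq_one_div_of_mul_eq_one_right ?_
  rw [← Real.sq_sqrt hq, ← mul_pow, h, one_pow]

theorem boehm_unique_fixed_point_general (m : ℝ) (hm : 1 < m) (n : ℕ) (hn : 3 ≤ n)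
    (c : ℝ) (hc : c = (1 / (m - 1)) * Real.sqrt (m * (m + n - 2) / (n - 1)))
    (X Y W : ℝ) (hX : 0 < X) (hY : 0 < Y) (hW : 0 < W)
    (hsphere : X ^ 2 + Y ^ 2 + W ^ 2 = 1)
    (h2 : Y * (X ^ 2 - Y ^ 2 / (m - 1)) - c * X * Y + Y / (m - 1) = 0)
    (h3 : W * (X ^ 2 - Y ^ 2 / (m - 1)) = 0) :
    X = Real.sqrt ((n - 1) / (m * (m + n - 2))) ∧
      Y = Real.sqrt ((m - 1) * (n - 1) / (m * (m + n - 2))) ∧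
      W = Real.sqrt ((m - 1) / (m + n - 2)) := by
  have hm1 : 0 < m - 1 := by linarith
  have hn1 : (0 : ℝ) < n - 1 := by
    have : (3 : ℝ) ≤ n := by exact_mod_cast hn
    linarith
  have hmn : 0 < m + n - 2 := by linarith
  have hXY : X ^ 2 - Y ^ 2 / (m - 1) = 0 := (mul_eq_zero.mp h3).resolve_left hW.ne'
  have hcX : c * X = 1 / (m - 1) := by
    refine mul_right_cancel₀ hY.ne' ?_
    linear_combination -h2 + Y * hXY
  have hX2 : X ^ 2 = (n - 1) / (m * (m + n - 2)) := by
    have hsqrtX : √(m * (m + n - 2) / (n - 1)) * X = 1 := by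
      rw [hc] at hcX
      field_simp at hcX
      linarith
    rw [sq_eq_inv_of_sqrt_mul_eq_one (by positivity) hsqrtX, one_div_div]
  have hY2 : Y ^ 2 = (m - 1) * (n - 1) / (m * (m + n - 2)) := by
    rw [mul_div_assoc, ← hX2]
    field_simp at hXY
    linarith
  have hW2 : W ^ 2 = (m - 1) / (m + n - 2) := by
    rw [show W ^ 2 = 1 - X ^ 2 - Y ^ 2 by linarith, hX2, hY2]
    field_simp
    ring
  exact ⟨by rw [← hX2, Real.sqrt_sq hX.le], by rw [← hY2, Real.sqrt_sq hY.le],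
    by rw [← hW2, Real.sqrt_sq hW.le]⟩

/-- The assertion in the proof of Theorem 5.7 of the paper that
`K = (√((n−1)/(m(m+n−2))), √((m−1)(n−1)/(m(m+n−2))), √((m−1)/(m+n−2)))` is the only
fixed point of the Böhm system on the unit sphere in the open first octant. -/
theorem boehm_unique_fixed_point (m : ℝ) (hm : 1 < m) (n : ℕ) (hn : 3 ≤ n)
    (c : ℝ) (hc : c = (1 / (m - 1)) * Real.sqrt (m * (m + n - 2) / (n - 1)))
    (X Y W : ℝ) (hX : 0 < X) (hY : 0 < Y) (hW : 0 < W)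
    (hsphere : X ^ 2 + Y ^ 2 + W ^ 2 = 1)
    (h1 : X * (X ^ 2 - Y ^ 2 / (m - 1)) + c * Y ^ 2 - X = 0)
    (h2 : Y * (X ^ 2 - Y ^ 2 / (m - 1)) - c * X * Y + Y / (m - 1) = 0)
    (h3 : W * (X ^ 2 - Y ^ 2 / (m - 1)) = 0) :
    X = Real.sqrt ((n - 1) / (m * (m + n - 2))) ∧
      Y = Real.sqrt ((m - 1) * (n - 1) / (m * (m + n - 2))) ∧
      W = Real.sqrt ((m - 1) / (m + n - 2)) :=
  boehm_unique_fixed_point_general m hm n hn c hc X Y W hX hY hW hsphere h2 h3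
end

section
/- Fix a real number m > 1 and a natural number n ≥ 3, and let s = √((m−1)(m+n−2)(n−2)). Let A be the 3×3 real matrix A = [[ (2(m+n−2)−m(n−2))/(m(n−1)), 2s/(m(n−1)), 0 ], [ (m−2)s/(m(m−1)(n−1)), (2(m+n−2)−2m(n−1))/(m(m−1)(n−1)), 0 ], [ 0, 0, 1/(n−1) ]]. Then the characteristic polynomial of A factors as det(t·Id − A) = (t − 1/(n−1))·(t − 2/(n−1))·(t + (n−2)/(n−1)); in particular the eigenvalues of A are 1/(n−1), 2/(n−1) and −(n−2)/(n−1). (A is the linearization of the Böhm system at the critical point I, and this eigenvalue computation — showing I is a saddle with a one-dimensional stable direction — is the key step in the uniqueness part of the proof of Theorem 5.7 of the paper.) -/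
/-!
The linearization is block diagonal: a `2 × 2` block and the entry `1/(n−1)`. The block has
trace `(4−n)/(n−1)` and, because `s² = (m−1)(m+n−2)(n−2)`, determinant `−2(n−2)/(n−1)²`;
these are the sum and product of `2/(n−1)` and `−(n−2)/(n−1)`, its two eigenvalues.
-/

open Matrix

theorem det_smul_one_sub_blockDiag_two_one {R : Type*} [CommRing R] (a b c d e t : R) :
    (t • (1 : Matrix (Fin 3) (Fin 3) R) - !![a, b, 0; c, d, 0; 0, 0, e]).det =
      ((t - a) * (t - d) - b * c) * (t - e) := by
  rw [det_fin_three]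
  simp only [Matrix.sub_apply, Matrix.smul_apply, one_apply, of_apply, cons_val', cons_val_zero,
    cons_val_one, cons_val, cons_val_fin_one, Fin.reduceEq, ↓reduceIte, smul_eq_mul]
  ring

theorem sub_mul_sub_sub_mul_eq_of_add_eq_of_sub_eq {R : Type*} [CommRing R]
    {a b c d μ ν : R} (htrace : a + d = μ + ν) (hdet : a * d - b * c = μ * ν) (t : R) :
    (t - a) * (t - d) - b * c = (t - μ) * (t - ν) := by
  linear_combination (-t) * htrace + hdet

theorem boehm_block_trace {m n : ℝ} (hm : m ≠ 0) (hm1 : m - 1 ≠ 0) (hn1 : n - 1 ≠ 0) :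
    (2 * (m + n - 2) - m * (n - 2)) / (m * (n - 1)) +
        (2 * (m + n - 2) - 2 * m * (n - 1)) / (m * (m - 1) * (n - 1)) =
      2 / (n - 1) + -((n - 2) / (n - 1)) := by
  field_simp
  ring

theorem boehm_block_det {m n s : ℝ} (hm : m ≠ 0) (hm1 : m - 1 ≠ 0) (hn1 : n - 1 ≠ 0)
    (hs : s ^ 2 = (m - 1) * (m + n - 2) * (n - 2)) :
    (2 * (m + n - 2) - m * (n - 2)) / (m * (n - 1)) *
          ((2 * (m + n - 2) - 2 * m * (n - 1)) / (m * (m - 1) * (n - 1))) -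
        2 * s / (m * (n - 1)) * ((m - 2) * s / (m * (m - 1) * (n - 1))) =
      2 / (n - 1) * -((n - 2) / (n - 1)) := by
  field_simp
  linear_combination (2 - m) * hs

/-- The eigenvalue computation for the linearization of the Böhm system at the
critical point `I`, the key step in the uniqueness part of the proof of
Theorem 5.7 of the paper: with `s = √((m−1)(m+n−2)(n−2))`, the characteristic
polynomial of the linearization matrix `A` factors as
`det(t·Id − A) = (t − 1/(n−1))(t − 2/(n−1))(t + (n−2)/(n−1))`. -/
theorem boehm_linearization_eigenvalues (m : ℝ) (hm : 1 < m) (n : ℕ) (hn : 3 ≤ n)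
    (s : ℝ) (hs : s = Real.sqrt ((m - 1) * (m + n - 2) * (n - 2)))
    (A : Matrix (Fin 3) (Fin 3) ℝ)
    (hA : A = !![(2 * (m + n - 2) - m * (n - 2)) / (m * (n - 1)),
                   2 * s / (m * (n - 1)), 0;
                 (m - 2) * s / (m * (m - 1) * (n - 1)),
                   (2 * (m + n - 2) - 2 * m * (n - 1)) / (m * (m - 1) * (n - 1)), 0;
                 0, 0, 1 / ((n : ℝ) - 1)]) :
    ∀ t : ℝ, (t • (1 : Matrix (Fin 3) (Fin 3) ℝ) - A).det =
      (t - 1 / (n - 1)) * (t - 2 / (n - 1)) * (t + (n - 2) / (n - 1)) := by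
  intro t
  have hn3 : (3 : ℝ) ≤ n := by exact_mod_cast hn
  have hm0 : m ≠ 0 := (zero_lt_one.trans hm).ne'
  have hm1 : m - 1 ≠ 0 := sub_ne_zero.mpr hm.ne'
  have hn1 : (n : ℝ) - 1 ≠ 0 := by linarith
  have hs2 : s ^ 2 = (m - 1) * (m + n - 2) * (n - 2) := by
    rw [hs, Real.sq_sqrt]
    exact mul_nonneg (mul_nonneg (by linarith) (by linarith)) (by linarith)
  rw [hA, det_smul_one_sub_blockDiag_two_one,
    sub_mul_sub_sub_mul_eq_of_add_eq_of_sub_eq (boehm_block_trace hm0 hm1 hn1)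
      (boehm_block_det hm0 hm1 hn1 hs2), sub_neg_eq_add]
  ring
end

section
/- Let m > 1 be a real number, n ≥ 1 a natural number, and let λ, μ, r, p, u be real numbers with λ > 0, u > 0 and p ≥ 0. Suppose r + (m+n−1)(m+n−2)·p/u² + (m+n−2)·λ/u² = (m+2n−2)·μ and p + λ/(m+n−1) < (μ/(m−1))·u². Then −(n(n−1)/(m−1))·μ < r ≤ (m+2n−2)·μ. (This is the algebraic derivation of Corollary 4.37 of the paper: for a compact quasi-Einstein smooth metric measure space (Mⁿ,g,u^{2−m−n}dvol) with m > 1, quasi-Einstein constant μ and characteristic constant λ > 0, the trace identity (4.13) together with the gradient estimate (4.12) yields the two-sided scalar curvature bound −n(n−1)μ/(m−1) < R ≤ (m+2n−2)μ; here r = R and p = |∇u|² at a point.) -/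
/-! Solving the trace identity for `R` gives `R = (m+2n-2)μ - (m+n-2)((m+n-1)|∇u|² + λ)/u²`.
The subtracted term is nonnegative, which is the upper bound; the gradient estimate bounds it by
`(m+n-2)(m+n-1)μ/(m-1)`, and `(m+2n-2)(m-1) - (m+n-1)(m+n-2) = -n(n-1)` gives the lower bound. -/

lemma mul_add_div_sq_lt {a c p lam mu u : ℝ} (ha : 0 < a) (hc : 0 < c) (hu : u ≠ 0)
    (h : p + lam / a < mu / c * u ^ 2) : (a * p + lam) / u ^ 2 < a * mu / c := by
  have hu2 : 0 < u ^ 2 := by positivity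
  calc (a * p + lam) / u ^ 2 = a * (p + lam / a) / u ^ 2 := by field_simp
    _ < a * (mu / c * u ^ 2) / u ^ 2 := by gcongr
    _ = a * mu / c := by field_simp

lemma add_two_mul_sub_mul_div_sub_one (m n mu : ℝ) (hm : m ≠ 1) :
    (m + 2 * n - 2) * mu - (m + n - 2) * ((m + n - 1) * mu / (m - 1))
      = -(n * (n - 1) / (m - 1)) * mu := by
  have : m - 1 ≠ 0 := sub_ne_zero.2 hm
  field_simp
  ring

/-- The algebraic derivation of Corollary 4.37 of the paper: if `m > 1`, `λ > 0`,
`u > 0`, `p ≥ 0`, `r + (m+n−1)(m+n−2)p/u² + (m+n−2)λ/u² = (m+2n−2)μ` and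
`p + λ/(m+n−1) < (μ/(m−1))u²`, then `−(n(n−1)/(m−1))μ < r ≤ (m+2n−2)μ`. -/
theorem scalar_curvature_bounds (m : ℝ) (hm : 1 < m) (n : ℕ) (hn : 1 ≤ n)
    (lam mu r p u : ℝ) (hlam : 0 < lam) (hu : 0 < u) (hp : 0 ≤ p)
    (htrace : r + (m + n - 1) * (m + n - 2) * p / u ^ 2 + (m + n - 2) * lam / u ^ 2
      = (m + 2 * n - 2) * mu)
    (hgrad : p + lam / (m + n - 1) < (mu / (m - 1)) * u ^ 2) :
    -((n : ℝ) * (n - 1) / (m - 1)) * mu < r ∧ r ≤ (m + 2 * n - 2) * mu := by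
  have hn1 : (1 : ℝ) ≤ n := by exact_mod_cast hn
  have hb : 0 < m + n - 2 := by linarith
  have hr : r = (m + 2 * n - 2) * mu - (m + n - 2) * (((m + n - 1) * p + lam) / u ^ 2) := by
    rw [← htrace]
    ring
  constructor
  · have hterm := mul_lt_mul_of_pos_left
      (mul_add_div_sq_lt (by linarith) (sub_pos.2 hm) hu.ne' hgrad) hb
    rw [← add_two_mul_sub_mul_div_sub_one m n mu hm.ne', hr]
    linarith
  · have hterm : 0 ≤ (m + n - 2) * (((m + n - 1) * p + lam) / u ^ 2) := by
      have ha : 0 ≤ m + n - 1 := by linarith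
      positivity
    rw [hr]
    linarith
end
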